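/- arXiv:2508.09280 — 3 statements merged into one kernel-verified Lean document; each statement's English description precedes it below -/
import Mathlib

section
/- A feasible flow u ∈ ℱ is implementable if and only if u is an optimal solution of the linear program: minimize ∑_{(i,p)∈𝒫} τ_{i,p}(u)·x_{i,p} over x ∈ ℱ subject to ∑_{(i,p)∈𝒫} g_{i,p,j}(u)·x_{i,p} ≤ G_j(u) for all j ∈ J. -/
/-
If `u` is a Wardrop equilibrium for the priced costs `c^λ`, then within every commodity all used
paths have minimal priced cost, so `u` minimises `x ↦ c^λ(u) · x` over `ℱ`; expanding `c^λ` and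
using `λ ≥ 0` together with the LP constraints turns this into LP optimality.

Conversely, `u ∈ WE(λ)` is a linear system in `λ ≥ 0`: one inequality for every commodity `i` and
every switch `p → q` with `u_{i,p} > 0`. If it has no solution, Farkas' lemma yields nonnegative
weights on these switches. Moving flow along the weighted switches gives a direction `δ` that keeps
all demands, decreases only used paths, does not increase any `∑ g_{·,j}(u) x` and strictly
decreases `∑ τ(u) x`; a small step from `u` along `δ` then beats `u` in the LP.
Farkas' lemma comes from the separation theorem for closed convex cones; finitely generated cones
are closed by Carathéodory's theorem for cones.
-/

open Finset

variable {I : Type*} [Fintype I] {P : I → Type*} [∀ i, Fintype (P i)]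
  {J : Type*} [Fintype J]

/-- A flow is feasible if it is nonnegative and satisfies all demands. -/
def Feasible (d : I → ℝ) (x : ∀ i, P i → ℝ) : Prop :=
  (∀ i p, 0 ≤ x i p) ∧ ∀ i, ∑ p, x i p = d i

/-- Wardrop equilibrium with respect to a cost function. -/
def IsWardrop (d : I → ℝ) (c : (∀ i, P i → ℝ) → ∀ i, P i → ℝ)
    (x : ∀ i, P i → ℝ) : Prop :=
  Feasible d x ∧ ∀ i p, 0 < x i p → ∀ q, c x i p ≤ c x i q

/-- The priced cost `c^λ_{i,p}(x) = τ_{i,p}(x) + ∑_j λ_j · g_{i,p,j}(x)`. -/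
def cPrice (τ : (∀ i, P i → ℝ) → ∀ i, P i → ℝ)
    (g : (∀ i, P i → ℝ) → ∀ i, P i → J → ℝ) (lam : J → ℝ) :
    (∀ i, P i → ℝ) → ∀ i, P i → ℝ :=
  fun x i p => τ x i p + ∑ j, lam j * g x i p j

open Topology Filter

section ConicHull

variable {𝕜 E ι : Type*} [Field 𝕜] [LinearOrder 𝕜] [IsStrictOrderedRing 𝕜]
  [AddCommGroup E] [Module 𝕜 E]

lemma exists_erase_sum_smul_eq [DecidableEq ι] {v : ι → E} {t : Finset ι} {c G : ι → 𝕜}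
    (hc : ∀ i ∈ t, 0 ≤ c i) (hG : ∑ i ∈ t, G i • v i = 0) (hpos : ∃ i ∈ t, 0 < G i) :
    ∃ i₀ ∈ t, ∃ c' : ι → 𝕜, (∀ i ∈ t.erase i₀, 0 ≤ c' i) ∧
      ∑ i ∈ t.erase i₀, c' i • v i = ∑ i ∈ t, c i • v i := by
  -- subtract the largest multiple of the dependence `G` that keeps the coefficients nonnegative
  obtain ⟨i₀, hi₀, hmin⟩ := (t.filter (0 < G ·)).exists_min_image (fun i => c i / G i)
    (by simpa [Finset.Nonempty] using hpos)
  rw [mem_filter] at hi₀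
  set r := c i₀ / G i₀
  have hr : 0 ≤ r := div_nonneg (hc _ hi₀.1) hi₀.2.le
  refine ⟨i₀, hi₀.1, fun i => c i - r * G i, fun i hi => ?_, ?_⟩
  · have hit := (mem_erase.1 hi).2
    rcases lt_or_ge 0 (G i) with hGi | hGi
    · have := hmin i (mem_filter.2 ⟨hit, hGi⟩)
      rw [le_div_iff₀ hGi] at this
      linarith
    · nlinarith [hc i hit]
  · have h0 : c i₀ - r * G i₀ = 0 := by simp [r, div_mul_cancel₀ _ hi₀.2.ne']
    rw [sum_erase t (f := fun i => (c i - r * G i) • v i) (by simp only [h0, zero_smul])]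
    simp [sub_smul, sum_sub_distrib, mul_smul, ← smul_sum, hG]

variable (𝕜) in
def conicHull [Fintype ι] (v : ι → E) : PointedCone 𝕜 E :=
  (PointedCone.positive 𝕜 (ι → 𝕜)).map (Fintype.linearCombination 𝕜 v)

lemma mem_conicHull [Fintype ι] {v : ι → E} {b : E} :
    b ∈ conicHull 𝕜 v ↔ ∃ c : ι → 𝕜, 0 ≤ c ∧ ∑ i, c i • v i = b := by
  simp [conicHull, PointedCone.mem_map, Fintype.linearCombination_apply]

lemma subset_conicHull [Fintype ι] (v : ι → E) (i : ι) : v i ∈ conicHull 𝕜 v := by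
  classical
  exact mem_conicHull.2 ⟨Pi.single i 1, by simp [Pi.single_nonneg], by simp [Pi.single_apply]⟩

lemma conicHull_restrict_le [Fintype ι] (v : ι → E) (s : Finset ι) :
    conicHull 𝕜 (fun i : s => v i) ≤ conicHull 𝕜 v := by
  classical
  rintro b hb
  obtain ⟨c, hc, rfl⟩ := mem_conicHull.1 hb
  refine mem_conicHull.2 ⟨fun i => if h : i ∈ s then c ⟨i, h⟩ else 0, fun i => ?_, ?_⟩
  · dsimp only
    split_ifs
    exacts [hc _, le_rfl]
  · rw [← sum_subset (subset_univ s) (fun i _ hi => by simp [hi]), ← sum_coe_sort s]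
    simp

lemma exists_linearIndependent_sum_smul_mem_conicHull (v : ι → E) (t : Finset ι) (c : ι → 𝕜)
    (hc : ∀ i ∈ t, 0 ≤ c i) :
    ∃ s ⊆ t, LinearIndependent 𝕜 (fun i : s => v i) ∧
      ∑ i ∈ t, c i • v i ∈ conicHull 𝕜 (fun i : s => v i) := by
  classical
  induction t using Finset.strongInduction generalizing c with
  | _ t ih =>
  by_cases hli : LinearIndependent 𝕜 (fun i : t => v i)
  · exact ⟨t, subset_rfl, hli, mem_conicHull.2
      ⟨fun i => c i, fun i => hc i i.2, sum_coe_sort t (fun i => c i • v i)⟩⟩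
  obtain ⟨g, hg, i₁, hi₁⟩ := Fintype.not_linearIndependent_iff.1 hli
  obtain ⟨G, hG, hpos⟩ : ∃ G : ι → 𝕜, ∑ i ∈ t, G i • v i = 0 ∧ ∃ i ∈ t, 0 < G i := by
    set G : ι → 𝕜 := fun i => if h : i ∈ t then g ⟨i, h⟩ else 0
    have hG : ∑ i ∈ t, G i • v i = 0 := by
      rw [← sum_coe_sort t, ← hg]
      simp [G]
    rcases (show G i₁ ≠ 0 by simpa [G] using hi₁).lt_or_gt with hneg | hpos
    · exact ⟨-G, by simp [neg_smul, hG], i₁, i₁.2, neg_pos.2 hneg⟩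
    · exact ⟨G, hG, i₁, i₁.2, hpos⟩
  obtain ⟨i₀, hi₀, c', hc', hsum⟩ := exists_erase_sum_smul_eq hc hG hpos
  obtain ⟨s, hs, hli, hmem⟩ := ih _ (erase_ssubset hi₀) c' hc'
  exact ⟨s, hs.trans (erase_subset _ _), hli, hsum ▸ hmem⟩

end ConicHull

section Farkas

variable {E ι : Type*} [NormedAddCommGroup E] [NormedSpace ℝ E] [Fintype ι]

lemma LinearIndependent.isClosed_conicHull {v : ι → E} (hv : LinearIndependent ℝ v) :
    IsClosed (conicHull ℝ v : Set E) := by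
  have hemb := LinearMap.isClosedEmbedding_of_injective
    (LinearMap.ker_eq_bot.2 (linearIndependent_iff_injective_fintypeLinearCombination.1 hv))
  exact hemb.isClosedMap _ isClosed_Ici

lemma isClosed_conicHull (v : ι → E) : IsClosed (conicHull ℝ v : Set E) := by
  classical
  have : (conicHull ℝ v : Set E) =
      ⋃ s : {s : Finset ι // LinearIndependent ℝ (fun i : s => v i)},
        conicHull ℝ (fun i : s.1 => v i) := by
    refine subset_antisymm (fun b hb => ?_)
      (Set.iUnion_subset fun s => conicHull_restrict_le v s.1)
    obtain ⟨c, hc, rfl⟩ := mem_conicHull.1 hb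
    obtain ⟨s, -, hs, hmem⟩ :=
      exists_linearIndependent_sum_smul_mem_conicHull v univ c fun i _ => hc i
    exact Set.mem_iUnion.2 ⟨⟨s, hs⟩, hmem⟩
  rw [this]
  exact isClosed_iUnion_of_finite fun s => s.2.isClosed_conicHull

lemma exists_dual_neg_of_notMem_conicHull [FiniteDimensional ℝ E] {v : ι → E} {b : E}
    (hb : b ∉ conicHull ℝ v) : ∃ f : StrongDual ℝ E, (∀ i, 0 ≤ f (v i)) ∧ f b < 0 := by
  obtain ⟨f, hf, hfb⟩ :=
    ProperCone.hyperplane_separation_point ⟨conicHull ℝ v, isClosed_conicHull v⟩ hb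
  exact ⟨f, fun i => hf _ (subset_conicHull v i), hfb⟩

theorem farkas_alternative {κ T : Type*} [Fintype κ] [Fintype T] (a : κ → T → ℝ)
    (b : T → ℝ) :
    (∃ μ : κ → ℝ, 0 ≤ μ ∧ ∀ t, 0 ≤ b t + ∑ k, μ k * a k t) ∨
      ∃ w : T → ℝ, 0 ≤ w ∧ (∀ k, ∑ t, a k t * w t ≤ 0) ∧ ∑ t, b t * w t < 0 := by
  classical
  -- the first alternative says exactly that `b` lies in the cone spanned by the `-a k` and the
  -- unit vectors
  let v : κ ⊕ T → T → ℝ := Sum.elim (fun k => -a k) fun t s => if t = s then 1 else 0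
  by_cases hb : b ∈ conicHull ℝ v
  · left
    obtain ⟨c, hc, hcb⟩ := mem_conicHull.1 hb
    refine ⟨fun k => c (.inl k), fun k => hc _, fun t => ?_⟩
    show 0 ≤ b t + ∑ k, c (.inl k) * a k t
    have := congrFun hcb t
    simp only [v, Finset.sum_apply, Pi.smul_apply, smul_eq_mul, Fintype.sum_sum_type, Sum.elim_inl,
      Pi.neg_apply, mul_neg, sum_neg_distrib, Sum.elim_inr, mul_ite, mul_one, mul_zero,
      sum_ite_eq', mem_univ, if_true] at this
    linarith [show 0 ≤ c (.inr t) from hc _]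
  · right
    obtain ⟨f, hf, hfb⟩ := exists_dual_neg_of_notMem_conicHull hb
    have hf_apply (x : T → ℝ) : f x = ∑ t, x t * f (v (.inr t)) :=
      (f : (T → ℝ) →ₗ[ℝ] ℝ).pi_apply_eq_sum_univ x
    refine ⟨fun t => f (v (.inr t)), fun t => hf _, fun k => ?_, by rwa [hf_apply] at hfb⟩
    have := hf (.inl k)
    rw [hf_apply] at this
    simpa [v] using this

end Farkas

section SingleCommodity

variable {Q : Type*} [Fintype Q]

lemma sum_mul_le_sum_mul_of_pos_imp_le {c u x : Q → ℝ} (hu : ∀ p, 0 ≤ u p)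
    (hx : ∀ p, 0 ≤ x p) (hsum : ∑ p, u p = ∑ p, x p) (hc : ∀ p, 0 < u p → ∀ q, c p ≤ c q) :
    ∑ p, c p * u p ≤ ∑ p, c p * x p := by
  by_cases h : ∃ p₀, 0 < u p₀
  · obtain ⟨p₀, hp₀⟩ := h
    have hu_eq (p : Q) : c p * u p = c p₀ * u p := by
      rcases (hu p).eq_or_lt with h0 | hp
      · simp [← h0]
      · rw [le_antisymm (hc p hp p₀) (hc p₀ hp₀ p)]
    calc ∑ p, c p * u p = ∑ p, c p₀ * x p := by simp_rw [hu_eq, ← mul_sum, hsum]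
      _ ≤ ∑ p, c p * x p :=
        sum_le_sum fun p _ => mul_le_mul_of_nonneg_right (hc p₀ hp₀ p) (hx p)
  · push Not at h
    have hu0 (p : Q) : u p = 0 := le_antisymm (h p) (hu p)
    have hx0 : ∀ p ∈ univ, x p = 0 :=
      (sum_eq_zero_iff_of_nonneg fun p _ => hx p).1 (by simp [← hsum, hu0])
    simp [hu0, hx0]

def netInflow (W : Q → Q → ℝ) (r : Q) : ℝ :=
  ∑ p, W p r - ∑ q, W r q

lemma sum_mul_netInflow (W : Q → Q → ℝ) (f : Q → ℝ) :
    ∑ r, f r * netInflow W r = ∑ p, ∑ q, (f q - f p) * W p q := by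
  simp only [netInflow, mul_sub, sub_mul, sum_sub_distrib, mul_sum]
  rw [sum_comm (f := fun r p => f r * W p r)]

lemma sum_netInflow (W : Q → Q → ℝ) : ∑ r, netInflow W r = 0 := by
  simpa using sum_mul_netInflow W 1

/-- The change of `F` when flow switches from `pq.1` to `pq.2`, counted only if `pq.1` is used
by `u`. -/
noncomputable def switchDiff (u F : Q → ℝ) (pq : Q × Q) : ℝ :=
  if 0 < u pq.1 then F pq.2 - F pq.1 else 0

noncomputable def supportedTransfer (u : Q → ℝ) (w : Q × Q → ℝ) (p q : Q) : ℝ :=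
  if 0 < u p then w (p, q) else 0

lemma sum_switchDiff_mul (u F : Q → ℝ) (w : Q × Q → ℝ) :
    ∑ pq, switchDiff u F pq * w pq = ∑ r, F r * netInflow (supportedTransfer u w) r := by
  rw [sum_mul_netInflow, Fintype.sum_prod_type]
  refine sum_congr rfl fun p _ => sum_congr rfl fun q _ => ?_
  by_cases hp : 0 < u p <;> simp [switchDiff, supportedTransfer, hp]

lemma pos_of_netInflow_supportedTransfer_neg {u : Q → ℝ} {w : Q × Q → ℝ} (hw : 0 ≤ w)
    {r : Q} (h : netInflow (supportedTransfer u w) r < 0) : 0 < u r := by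
  by_contra hr
  refine h.not_ge ?_
  simp only [netInflow, supportedTransfer, hr, if_false, sum_const_zero, sub_zero]
  exact sum_nonneg fun p _ => by split_ifs; exacts [hw _, le_rfl]

end SingleCommodity

lemma exists_pos_forall_add_mul_nonneg {T : Type*} [Finite T] {u δ : T → ℝ}
    (hu : ∀ t, 0 ≤ u t) (hδ : ∀ t, δ t < 0 → 0 < u t) : ∃ ε > 0, ∀ t, 0 ≤ u t + ε * δ t := by
  have h (t : T) : ∀ᶠ ε in 𝓝[>] (0 : ℝ), 0 ≤ u t + ε * δ t := by
    rcases lt_or_ge (δ t) 0 with hneg | hnonneg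
    · have hlim : Tendsto (fun ε : ℝ => u t + ε * δ t) (𝓝[>] 0) (𝓝 (u t)) := by
        refine Tendsto.mono_left ?_ nhdsWithin_le_nhds
        exact Continuous.tendsto' (f := fun ε : ℝ => u t + ε * δ t) (by fun_prop) 0 (u t)
          (by simp)
      exact (hlim.eventually_const_lt (hδ t hneg)).mono fun ε => le_of_lt
    · filter_upwards [self_mem_nhdsWithin] with ε hε
      exact add_nonneg (hu t) (mul_nonneg (le_of_lt hε) hnonneg)
  obtain ⟨ε, hε, hpos⟩ := ((eventually_all.2 h).and self_mem_nhdsWithin).exists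
  exact ⟨ε, hpos, hε⟩

lemma sum_sum_cPrice_mul (τ : (∀ i, P i → ℝ) → ∀ i, P i → ℝ)
    (g : (∀ i, P i → ℝ) → ∀ i, P i → J → ℝ) (lam : J → ℝ) (y x : ∀ i, P i → ℝ) :
    ∑ i, ∑ p, cPrice τ g lam y i p * x i p =
      ∑ i, ∑ p, τ y i p * x i p + ∑ j, lam j * ∑ i, ∑ p, g y i p j * x i p := by
  simp only [cPrice, add_mul, sum_add_distrib, sum_mul, mul_sum]
  congr 1
  rw [sum_comm]
  refine sum_congr rfl fun i _ => ?_
  rw [sum_comm]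
  exact sum_congr rfl fun p _ => sum_congr rfl fun j _ => by ring

lemma IsWardrop.sum_sum_mul_le {d : I → ℝ} {c : (∀ i, P i → ℝ) → ∀ i, P i → ℝ}
    {u x : ∀ i, P i → ℝ} (hu : IsWardrop d c u) (hx : Feasible d x) :
    ∑ i, ∑ p, c u i p * u i p ≤ ∑ i, ∑ p, c u i p * x i p :=
  sum_le_sum fun i _ => sum_mul_le_sum_mul_of_pos_imp_le (hu.1.1 i) (hx.1 i)
    (by rw [hu.1.2 i, hx.2 i]) (hu.2 i)

theorem IsWardrop.lp_optimal {d : I → ℝ} {τ : (∀ i, P i → ℝ) → ∀ i, P i → ℝ}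
    {g : (∀ i, P i → ℝ) → ∀ i, P i → J → ℝ} {lam : J → ℝ} {u x : ∀ i, P i → ℝ}
    (hu : IsWardrop d (cPrice τ g lam) u) (hlam : ∀ j, 0 ≤ lam j) (hx : Feasible d x)
    (hcon : ∀ j, ∑ i, ∑ p, g u i p j * x i p ≤ ∑ i, ∑ p, g u i p j * u i p) :
    ∑ i, ∑ p, τ u i p * u i p ≤ ∑ i, ∑ p, τ u i p * x i p := by
  have h := hu.sum_sum_mul_le hx
  rw [sum_sum_cPrice_mul, sum_sum_cPrice_mul] at h
  have : ∑ j, lam j * ∑ i, ∑ p, g u i p j * x i p ≤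
      ∑ j, lam j * ∑ i, ∑ p, g u i p j * u i p :=
    sum_le_sum fun j _ => mul_le_mul_of_nonneg_left (hcon j) (hlam j)
  linarith

structure IsImprovingDirection {κ : Type*} (c : ∀ i, P i → ℝ) (γ : ∀ i, P i → κ → ℝ)
    (u δ : ∀ i, P i → ℝ) : Prop where
  sum_eq_zero : ∀ i, ∑ r, δ i r = 0
  pos_of_neg : ∀ i r, δ i r < 0 → 0 < u i r
  constraint_nonpos : ∀ j, ∑ i, ∑ r, γ i r j * δ i r ≤ 0
  cost_neg : ∑ i, ∑ r, c i r * δ i r < 0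

theorem IsImprovingDirection.exists_feasible_lt {κ : Type*} {d : I → ℝ}
    {c : ∀ i, P i → ℝ} {γ : ∀ i, P i → κ → ℝ} {u δ : ∀ i, P i → ℝ}
    (hδ : IsImprovingDirection c γ u δ) (hu : Feasible d u) :
    ∃ x, Feasible d x ∧ (∀ j, ∑ i, ∑ p, γ i p j * x i p ≤ ∑ i, ∑ p, γ i p j * u i p) ∧
      ∑ i, ∑ p, c i p * x i p < ∑ i, ∑ p, c i p * u i p := by
  obtain ⟨ε, hε, hx⟩ := exists_pos_forall_add_mul_nonneg
    (u := fun t : Σ i, P i => u t.1 t.2) (δ := fun t => δ t.1 t.2)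
    (fun t => hu.1 _ _) fun t => hδ.pos_of_neg _ _
  have hlin (F : ∀ i, P i → ℝ) : ∑ i, ∑ p, F i p * (u i p + ε * δ i p) =
      ∑ i, ∑ p, F i p * u i p + ε * ∑ i, ∑ p, F i p * δ i p := by
    simp only [mul_add, sum_add_distrib, mul_sum, mul_left_comm ε]
  refine ⟨fun i p => u i p + ε * δ i p, ⟨fun i p => hx ⟨i, p⟩, fun i => ?_⟩, fun j => ?_,
    ?_⟩
  · rw [sum_add_distrib, ← mul_sum, hδ.sum_eq_zero, hu.2, mul_zero, add_zero]
  · rw [hlin]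
    nlinarith [hδ.constraint_nonpos j]
  · rw [hlin]
    nlinarith [hδ.cost_neg]

theorem exists_isWardrop_cPrice_or_exists_isImprovingDirection {d : I → ℝ}
    (τ : (∀ i, P i → ℝ) → ∀ i, P i → ℝ) (g : (∀ i, P i → ℝ) → ∀ i, P i → J → ℝ)
    {u : ∀ i, P i → ℝ} (hu : Feasible d u) :
    (∃ lam : J → ℝ, (∀ j, 0 ≤ lam j) ∧ IsWardrop d (cPrice τ g lam) u) ∨
      ∃ δ, IsImprovingDirection (τ u) (g u) u δ := by
  let D (F : ∀ i, P i → ℝ) (t : Σ i, P i × P i) : ℝ := switchDiff (u t.1) (F t.1) t.2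
  rcases farkas_alternative (fun j => D fun i p => g u i p j) (D (τ u))
    with ⟨lam, hlam, hW⟩ | ⟨w, hw, hg, hτ⟩
  · refine .inl ⟨lam, hlam, hu, fun i p hp q => ?_⟩
    have := hW ⟨i, (p, q)⟩
    simp only [D, switchDiff, if_pos hp, mul_sub, sum_sub_distrib] at this
    simp only [cPrice]
    linarith
  · let δ (i : I) : P i → ℝ := netInflow (supportedTransfer (u i) fun pq => w ⟨i, pq⟩)
    have hD (F : ∀ i, P i → ℝ) : ∑ t, D F t * w t = ∑ i, ∑ r, F i r * δ i r := by
      rw [Fintype.sum_sigma]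
      exact sum_congr rfl fun i _ => sum_switchDiff_mul (u i) (F i) fun pq => w ⟨i, pq⟩
    exact .inr ⟨δ, fun i => sum_netInflow _,
      fun i r => pos_of_netInflow_supportedTransfer_neg fun _ => hw _,
      fun j => hD (fun i p => g u i p j) ▸ hg j, hD (τ u) ▸ hτ⟩

theorem implementable_iff_lp_optimal_general
    (d : I → ℝ)
    (τ : (∀ i, P i → ℝ) → ∀ i, P i → ℝ)
    (g : (∀ i, P i → ℝ) → ∀ i, P i → J → ℝ)
    (u : ∀ i, P i → ℝ) (hu : Feasible d u) :
    (∃ lam : J → ℝ, (∀ j, 0 ≤ lam j) ∧ IsWardrop d (cPrice τ g lam) u) ↔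
      (∀ x, Feasible d x →
        (∀ j, ∑ i, ∑ p, g u i p j * x i p ≤ ∑ i, ∑ p, g u i p j * u i p) →
        ∑ i, ∑ p, τ u i p * u i p ≤ ∑ i, ∑ p, τ u i p * x i p) := by
  refine ⟨fun ⟨lam, hlam, hW⟩ x hx hcon => hW.lp_optimal hlam hx hcon, fun hopt => ?_⟩
  refine (exists_isWardrop_cPrice_or_exists_isImprovingDirection τ g hu).resolve_right ?_
  rintro ⟨δ, hδ⟩
  obtain ⟨x, hx, hcon, hlt⟩ := hδ.exists_feasible_lt hu
  exact (hopt x hx hcon).not_gt hlt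

/-- a feasible flow `u` is implementable iff it is an optimal solution of the LP
minimizing `∑ τ_{i,p}(u)·x_{i,p}` over feasible `x` subject to
`∑ g_{i,p,j}(u)·x_{i,p} ≤ G_j(u)` for all `j`. -/
theorem implementable_iff_lp_optimal
    [∀ i, Nonempty (P i)]
    (d : I → ℝ) (hd : ∀ i, 0 < d i)
    (τ : (∀ i, P i → ℝ) → ∀ i, P i → ℝ)
    (g : (∀ i, P i → ℝ) → ∀ i, P i → J → ℝ)
    (hg : ∀ x i p j, 0 ≤ g x i p j)
    (u : ∀ i, P i → ℝ) (hu : Feasible d u) :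
    (∃ lam : J → ℝ, (∀ j, 0 ≤ lam j) ∧ IsWardrop d (cPrice τ g lam) u) ↔
      (∀ x, Feasible d x →
        (∀ j, ∑ i, ∑ p, g u i p j * x i p ≤ ∑ i, ∑ p, g u i p j * u i p) →
        ∑ i, ∑ p, τ u i p * u i p ≤ ∑ i, ∑ p, τ u i p * x i p) :=
  implementable_iff_lp_optimal_general d τ g u hu
end

section
/- Assume |J| = 1, all travel time functions τ_{i,p} are continuous, and all externality functions g_{i,p} are constant. For i ∈ I set τ̄_i = sup_{x∈ℱ, p∈𝒫_i} τ_{i,p}(x), τ̲_i = inf_{x∈ℱ, p∈𝒫_i} τ_{i,p}(x), g_i* = min_{p∈𝒫_i} g_{i,p}, and g_i° = inf{g_{i,p} : p ∈ 𝒫_i, g_{i,p} > g_i*} (with g_i° = ∞ if all g_{i,p}, p ∈ 𝒫_i, are equal). Then for every price λ > max_{i∈I} (τ̄_i − τ̲_i)/(g_i° − g_i*), every Wardrop equilibrium x ∈ WE(λ) attains the minimal feasible budget, i.e., G(x) = min_{y∈ℱ} G(y). In particular, every feasible budget is strictly implementable. -/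
open Finset

variable {I : Type*} [Fintype I] {P : I → Type*} [∀ i, Fintype (P i)]

/-- Total externality for a single externality class with constant factors `g`. -/
def Gtot (g : ∀ i, P i → ℝ) (x : ∀ i, P i → ℝ) : ℝ :=
  ∑ i, ∑ p, g i p * x i p

/-- `τ̄_i`: supremum of the travel times of commodity `i` over feasible flows and paths. -/
noncomputable def tauSup (d : I → ℝ) (τ : (∀ i, P i → ℝ) → ∀ i, P i → ℝ) (i : I) : ℝ :=
  sSup {r : ℝ | ∃ x, ∃ p : P i, Feasible d x ∧ r = τ x i p}

/-- `τ̲_i`: infimum of the travel times of commodity `i` over feasible flows and paths. -/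
noncomputable def tauInf (d : I → ℝ) (τ : (∀ i, P i → ℝ) → ∀ i, P i → ℝ) (i : I) : ℝ :=
  sInf {r : ℝ | ∃ x, ∃ p : P i, Feasible d x ∧ r = τ x i p}

/-- `g_i^*`: the minimal externality factor on any path of commodity `i`. -/
noncomputable def gStar (g : ∀ i, P i → ℝ) (i : I) : ℝ :=
  sInf {r : ℝ | ∃ p : P i, r = g i p}

/-- `g_i^°`: the second-smallest externality factor of commodity `i`. -/
noncomputable def gCirc (g : ∀ i, P i → ℝ) (i : I) : ℝ :=
  sInf {r : ℝ | ∃ p : P i, r = g i p ∧ gStar g i < r}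

/-- for a single externality class, continuous travel times and constant
externality factors, every price `λ > max_i (τ̄_i − τ̲_i)/(g_i° − g_i*)` forces every
Wardrop equilibrium to attain the minimal feasible budget; in particular, every feasible
budget is strictly implementable. -/
theorem large_price_gives_minimal_externality
    [∀ i, Nonempty (P i)]
    (d : I → ℝ) (hd : ∀ i, 0 < d i)
    (τ : (∀ i, P i → ℝ) → ∀ i, P i → ℝ)
    (hτ : ∀ i p, ContinuousOn (fun x => τ x i p) {x | Feasible d x})
    (g : ∀ i, P i → ℝ) (hg : ∀ i p, 0 ≤ g i p)
    (lam : ℝ) (hlam0 : 0 < lam)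
    (hlam : ∀ i, (∃ p q : P i, g i p ≠ g i q) →
      (tauSup d τ i - tauInf d τ i) / (gCirc g i - gStar g i) < lam) :
    (∀ x, IsWardrop d (fun y i p => τ y i p + lam * g i p) x →
      ∀ y, Feasible d y → Gtot g x ≤ Gtot g y) ∧
    (∀ B : ℝ, 0 ≤ B → (∃ y, Feasible d y ∧ Gtot g y ≤ B) →
      ∃ lam' : ℝ, 0 < lam' ∧
        ∀ x, IsWardrop d (fun y i p => τ y i p + lam' * g i p) x → Gtot g x ≤ B) := by
  -- The set of feasible flows is compact.
  have hcomp : IsCompact {x : ∀ i, P i → ℝ | Feasible d x} := by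
    have hclosed : IsClosed {x : ∀ i, P i → ℝ | Feasible d x} := by
      have : {x : ∀ i, P i → ℝ | Feasible d x}
          = (⋂ i, ⋂ p, (fun x : ∀ i, P i → ℝ => x i p) ⁻¹' Set.Ici 0) ∩
            (⋂ i, (fun x : ∀ i, P i → ℝ => ∑ p, x i p) ⁻¹' {d i}) := by
        ext x
        simp [Feasible, Set.mem_iInter]
      rw [this]
      exact IsClosed.inter
        (isClosed_iInter fun i => isClosed_iInter fun p =>
          IsClosed.preimage ((continuous_apply p).comp (continuous_apply i)) isClosed_Ici)
        (isClosed_iInter fun i => IsClosed.preimage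
          (continuous_finset_sum _ fun p _ => (continuous_apply p).comp (continuous_apply i))
          isClosed_singleton)
    have hsub : {x : ∀ i, P i → ℝ | Feasible d x} ⊆
        Set.pi Set.univ (fun i => Set.pi Set.univ fun _ : P i => Set.Icc (0:ℝ) (d i)) := by
      intro x hx i _ p _
      refine ⟨hx.1 i p, ?_⟩
      calc x i p ≤ ∑ q, x i q := Finset.single_le_sum (fun q _ => hx.1 i q) (mem_univ p)
        _ = d i := hx.2 i
    exact IsCompact.of_isClosed_subset
      (isCompact_univ_pi fun i => isCompact_univ_pi fun _ => isCompact_Icc) hclosed hsub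
  -- The set of attained travel times is compact.
  have hScomp : ∀ i, IsCompact {r : ℝ | ∃ x, ∃ p : P i, Feasible d x ∧ r = τ x i p} := by
    intro i
    have hS : {r : ℝ | ∃ x, ∃ p : P i, Feasible d x ∧ r = τ x i p}
        = ⋃ p : P i, (fun x => τ x i p) '' {x | Feasible d x} := by
      ext r
      simp only [Set.mem_setOf_eq, Set.mem_iUnion, Set.mem_image]
      exact ⟨fun ⟨x, p, h, hr⟩ => ⟨p, x, h, hr.symm⟩, fun ⟨p, x, h, hr⟩ => ⟨x, p, h, hr.symm⟩⟩
    rw [hS]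
    exact isCompact_iUnion fun p => hcomp.image_of_continuousOn (hτ i p)
  have hτle : ∀ (x : ∀ i, P i → ℝ), Feasible d x → ∀ i (p : P i), τ x i p ≤ tauSup d τ i :=
    fun x hx i p => le_csSup (hScomp i).bddAbove ⟨x, p, hx, rfl⟩
  have hτge : ∀ (x : ∀ i, P i → ℝ), Feasible d x → ∀ i (p : P i), tauInf d τ i ≤ τ x i p :=
    fun x hx i p => csInf_le (hScomp i).bddBelow ⟨x, p, hx, rfl⟩
  -- gStar facts
  have hgfin : ∀ i, ({r : ℝ | ∃ p : P i, r = g i p}).Finite := fun i =>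
    (Set.finite_range (g i)).subset (fun r ⟨p, hp⟩ => ⟨p, hp.symm⟩)
  have hgStar_le : ∀ i (p : P i), gStar g i ≤ g i p := fun i p =>
    csInf_le (hgfin i).bddBelow ⟨p, rfl⟩
  have hgStar_mem : ∀ i, ∃ p : P i, gStar g i = g i p := by
    intro i
    have : gStar g i ∈ {r : ℝ | ∃ p : P i, r = g i p} :=
      Set.Nonempty.csInf_mem ⟨g i (Classical.arbitrary (P i)), Classical.arbitrary (P i), rfl⟩
        (hgfin i)
    exact this
  -- key: in equilibrium, positive-flow paths have minimal externality
  have key : ∀ x, IsWardrop d (fun y i p => τ y i p + lam * g i p) x →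
      ∀ i (p : P i), 0 < x i p → g i p = gStar g i := by
    intro x hx i p hxp
    by_contra hne
    have hgt : gStar g i < g i p := lt_of_le_of_ne (hgStar_le i p) (Ne.symm hne)
    obtain ⟨q, hq⟩ := hgStar_mem i
    have hTfin : ({r : ℝ | ∃ p' : P i, r = g i p' ∧ gStar g i < r}).Finite :=
      (hgfin i).subset (fun r ⟨p', h, _⟩ => ⟨p', h⟩)
    have hTne : ({r : ℝ | ∃ p' : P i, r = g i p' ∧ gStar g i < r}).Nonempty :=
      ⟨g i p, p, rfl, hgt⟩
    have hCirc_mem := Set.Nonempty.csInf_mem hTne hTfin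
    obtain ⟨p', -, hCirc_gt⟩ := hCirc_mem
    have hCirc_gt' : gStar g i < gCirc g i := hCirc_gt
    have hCirc_le : gCirc g i ≤ g i p := csInf_le hTfin.bddBelow ⟨p, rfl, hgt⟩
    have hlam' : (tauSup d τ i - tauInf d τ i) / (gCirc g i - gStar g i) < lam :=
      hlam i ⟨p, q, by rw [← hq]; exact ne_of_gt hgt⟩
    have h4 : tauSup d τ i - tauInf d τ i < lam * (gCirc g i - gStar g i) :=
      (div_lt_iff₀ (by linarith)).mp hlam'
    have h1 := hx.2 i p hxp q
    simp only at h1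
    have h2 := hτle x hx.1 i q
    have h3 := hτge x hx.1 i p
    have h7 : lam * gCirc g i ≤ lam * g i p := mul_le_mul_of_nonneg_left hCirc_le hlam0.le
    rw [hq] at h4
    nlinarith [h1, h2, h3, h4, h7]
  have main : ∀ x, IsWardrop d (fun y i p => τ y i p + lam * g i p) x →
      ∀ y, Feasible d y → Gtot g x ≤ Gtot g y := by
    intro x hx y hy
    have hxval : Gtot g x = ∑ i, gStar g i * d i := by
      unfold Gtot
      refine Finset.sum_congr rfl fun i _ => ?_
      rw [← hx.1.2 i, Finset.mul_sum]
      refine Finset.sum_congr rfl fun p _ => ?_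
      rcases (hx.1.1 i p).eq_or_lt with h | h
      · rw [← h, mul_zero, mul_zero]
      · rw [key x hx i p h]
    have hyval : ∑ i, gStar g i * d i ≤ Gtot g y := by
      unfold Gtot
      refine Finset.sum_le_sum fun i _ => ?_
      rw [← hy.2 i, Finset.mul_sum]
      exact Finset.sum_le_sum fun p _ =>
        mul_le_mul_of_nonneg_right (hgStar_le i p) (hy.1 i p)
    rw [hxval]; exact hyval
  refine ⟨main, fun B hB ⟨y, hy, hyB⟩ => ⟨lam, hlam0, fun x hx => ?_⟩⟩
  exact le_trans (main x hx y hy) hyB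
end

section
/- Let c : ℱ → ℝ^𝒫 be a cost function that has a convex potential, i.e., there is a differentiable convex function Φ : ℝ^𝒫 → ℝ with c(x) = ∇Φ(x) for all x ∈ ℱ. Then a feasible flow x ∈ ℱ is a Wardrop equilibrium with respect to c if and only if x minimizes Φ over ℱ. In particular, a Wardrop equilibrium with respect to c exists, and the set of Wardrop equilibria with respect to c is convex. -/
/-!
For a differentiable convex `Φ` and a convex set `ℱ`, `x ∈ ℱ` minimizes `Φ` on `ℱ` iff
`DΦ(x)(y - x) ≥ 0` for all `y ∈ ℱ`. As `DΦ(x) = c(x)` on `ℱ`, this is the variational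
inequality `∑ (y - x) c(x) ≥ 0`, which is the Wardrop condition: a Wardrop flow uses only
cheapest paths of each commodity, and conversely moving the flow of a path `p` onto a path `q`
changes the sum by `x_p (c_q - c_p)`. A minimizer exists since `ℱ` is compact, and the
minimizers form a sublevel set of `Φ` on `ℱ`, which is convex.
-/

open Finset

variable {I : Type*} [Fintype I] [DecidableEq I]
  {P : I → Type*} [∀ i, Fintype (P i)] [∀ i, DecidableEq (P i)]

section FirstOrder

variable {E : Type*} [NormedAddCommGroup E] [NormedSpace ℝ E] {f : E → ℝ} {s : Set E} {x y : E}

theorem ConvexOn.fderiv_sub_le_sub (hf : ConvexOn ℝ s f) (hx : x ∈ s) (hy : y ∈ s)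
    (hd : DifferentiableAt ℝ f x) : fderiv ℝ f x (y - x) ≤ f y - f x := by
  set g := AffineMap.lineMap (k := ℝ) x y
  have hconv : ConvexOn ℝ (g ⁻¹' s) (f ∘ g) := hf.comp_affineMap g
  have hderiv : HasDerivAt (f ∘ g) (fderiv ℝ f x (y - x)) 0 := by
    have hfx : HasFDerivAt f (fderiv ℝ f x) (g 0) := by simpa [g] using hd.hasFDerivAt
    exact hfx.comp_hasDerivAt 0 AffineMap.hasDerivAt_lineMap
  have hslope := hconv.le_slope_of_hasDerivAt (x := 0) (y := 1) (by simpa [g] using hx)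
    (by simpa [g] using hy) one_pos hderiv
  simpa [g, slope_def_field] using hslope

theorem ConvexOn.isMinOn_iff_forall_fderiv_sub_nonneg (hf : ConvexOn ℝ s f) (hx : x ∈ s)
    (hd : DifferentiableAt ℝ f x) : IsMinOn f s x ↔ ∀ y ∈ s, 0 ≤ fderiv ℝ f x (y - x) := by
  refine ⟨fun hmin y hy => ?_, fun hvi y hy => ?_⟩
  · exact hmin.localize.hasFDerivWithinAt_nonneg hd.hasFDerivAt.hasFDerivWithinAt
      (sub_mem_posTangentConeAt_of_segment_subset (hf.1.segment_subset hx hy))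
  · show f x ≤ f y
    linarith [hvi y hy, hf.fderiv_sub_le_sub hx hy hd]

end FirstOrder

theorem sum_sum_smul_single {R : Type*} [Semiring R] (w : ∀ i, P i → R) :
    ∑ i, ∑ p, w i p • (Pi.single i (Pi.single p 1) : ∀ j, P j → R) = w := by
  have hrow (i : I) :
      ∑ p, w i p • (Pi.single i (Pi.single p 1) : ∀ j, P j → R) = Pi.single i (w i) := by
    simp_rw [← Pi.single_smul, smul_eq_mul, mul_one]
    conv_rhs => rw [← Finset.univ_sum_single (w i)]
    exact (map_sum (AddMonoidHom.single (fun j => P j → R) i) _ _).symm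
  simp_rw [hrow, Finset.univ_sum_single]

theorem map_eq_sum_sum_smul_single {R M F : Type*} [Semiring R] [AddCommMonoid M] [Module R M]
    [FunLike F (∀ i, P i → R) M] [LinearMapClass F R (∀ i, P i → R) M] (L : F)
    (w : ∀ i, P i → R) : L w = ∑ i, ∑ p, w i p • L (Pi.single i (Pi.single p 1)) := by
  conv_lhs => rw [← sum_sum_smul_single w]
  simp only [map_sum, map_smul]

/-- On the support of `x` the cost `c` attains its minimum, so `x` pays that minimum on all of
its mass, whereas `y` pays at least that much. -/
theorem sum_mul_le_sum_mul_of_pos_imp_le_s7 {α : Type*} [Fintype α] {x y c : α → ℝ}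
    (hx : ∀ p, 0 ≤ x p) (hy : ∀ p, 0 ≤ y p) (hxy : ∑ p, x p = ∑ p, y p)
    (hc : ∀ p, 0 < x p → ∀ q, c p ≤ c q) : ∑ p, x p * c p ≤ ∑ p, y p * c p := by
  cases isEmpty_or_nonempty α
  · simp
  obtain ⟨m, hm⟩ := Finite.exists_min c
  have hsupp : ∀ p, x p * c p = x p * c m := by
    intro p
    rcases (hx p).eq_or_lt with hp | hp
    · simp [← hp]
    · rw [le_antisymm (hc p hp m) (hm p)]
  calc ∑ p, x p * c p = (∑ p, y p) * c m := by simp_rw [hsupp, ← Finset.sum_mul, hxy]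
    _ ≤ ∑ p, y p * c p := by
      rw [Finset.sum_mul]
      exact Finset.sum_le_sum fun p _ => mul_le_mul_of_nonneg_left (hm p) (hy p)

omit [Fintype I] [DecidableEq I] [∀ i, DecidableEq (P i)] in
theorem convex_setOf_feasible (d : I → ℝ) : Convex ℝ {x : ∀ i, P i → ℝ | Feasible d x} := by
  rintro x ⟨hx0, hxd⟩ y ⟨hy0, hyd⟩ a b ha hb hab
  refine ⟨fun i p => ?_, fun i => ?_⟩
  · simp only [Pi.add_apply, Pi.smul_apply, smul_eq_mul]
    have := hx0 i p; have := hy0 i p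
    positivity
  · simp only [Pi.add_apply, Pi.smul_apply, smul_eq_mul, Finset.sum_add_distrib,
      ← Finset.mul_sum, hxd, hyd, ← add_mul, hab, one_mul]

omit [Fintype I] [DecidableEq I] [∀ i, DecidableEq (P i)] in
theorem isCompact_setOf_feasible (d : I → ℝ) :
    IsCompact {x : ∀ i, P i → ℝ | Feasible d x} := by
  have hclosed : IsClosed {x : ∀ i, P i → ℝ | Feasible d x} := by
    simp only [Feasible, Set.ofPred_and, Set.ofPred_forall]
    exact (isClosed_iInter fun i => isClosed_iInter fun p => isClosed_le (by fun_prop)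
      (by fun_prop)).inter (isClosed_iInter fun i => isClosed_eq (by fun_prop) (by fun_prop))
  refine (isCompact_Icc (a := 0) (b := fun i _ => d i)).of_isClosed_subset hclosed ?_
  rintro x ⟨hx0, hxd⟩
  refine ⟨hx0, fun i p => ?_⟩
  exact (Finset.single_le_sum (fun q _ => hx0 i q) (Finset.mem_univ p)).trans_eq (hxd i)

omit [Fintype I] [DecidableEq I] [∀ i, DecidableEq (P i)] in
theorem exists_feasible [∀ i, Nonempty (P i)] {d : I → ℝ} (hd : ∀ i, 0 ≤ d i) :
    ∃ x : ∀ i, P i → ℝ, Feasible d x := by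
  refine ⟨fun i _ => d i / Fintype.card (P i), fun i p => by have := hd i; positivity,
    fun i => ?_⟩
  rw [Finset.sum_const, Finset.card_univ, nsmul_eq_mul, mul_div_cancel₀]
  exact Nat.cast_ne_zero.mpr Fintype.card_ne_zero

omit [Fintype I] in
theorem Feasible.add_smul_single_sub_single {d : I → ℝ} {x : ∀ i, P i → ℝ}
    (hx : Feasible d x) {i : I} {p q : P i} {t : ℝ} (ht0 : 0 ≤ t) (htx : t ≤ x i p) :
    Feasible d (x + t • (Pi.single i (Pi.single q 1) - Pi.single i (Pi.single p 1))) := by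
  obtain ⟨hx0, hxd⟩ := hx
  refine ⟨fun j r => ?_, fun j => ?_⟩
  · rcases eq_or_ne j i with rfl | hj
    · simp only [Pi.add_apply, Pi.smul_apply, Pi.sub_apply, Pi.single_eq_same, smul_eq_mul,
        Pi.single_apply]
      have := hx0 j r
      split_ifs <;> subst_vars <;> linarith
    · simp [Pi.single_eq_of_ne hj, hx0 j r]
  · rcases eq_or_ne j i with rfl | hj
    · simp [Finset.sum_add_distrib, ← Finset.mul_sum, Finset.sum_sub_distrib, hxd]
    · simp [Pi.single_eq_of_ne hj, hxd]

theorem isWardrop_iff_forall_sum_sum_sub_mul_nonneg {d : I → ℝ}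
    {c : (∀ i, P i → ℝ) → ∀ i, P i → ℝ} {x : ∀ i, P i → ℝ} (hx : Feasible d x) :
    IsWardrop d c x ↔
      ∀ y, Feasible d y → 0 ≤ ∑ i, ∑ p, (y i p - x i p) * c x i p := by
  refine ⟨fun hw y hy => ?_, fun hvi => ⟨hx, fun i p hp q => ?_⟩⟩
  · simp_rw [sub_mul, Finset.sum_sub_distrib]
    refine sub_nonneg.mpr (Finset.sum_le_sum fun i _ => ?_)
    exact sum_mul_le_sum_mul_of_pos_imp_le_s7 (hx.1 i) (hy.1 i) ((hx.2 i).trans (hy.2 i).symm)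
      (hw.2 i)
  · set y : ∀ i, P i → ℝ :=
      x + x i p • (Pi.single i (Pi.single q 1) - Pi.single i (Pi.single p 1))
    have hy : Feasible d y := hx.add_smul_single_sub_single (hx.1 i p) le_rfl
    have hgain : ∑ j, ∑ r, (y j r - x j r) * c x j r = x i p * (c x i q - c x i p) := by
      rw [Finset.sum_eq_single i (fun j _ hj => by simp [y, Pi.single_eq_of_ne hj]) (by simp)]
      simp [y, Pi.single_apply, mul_sub, sub_mul, Finset.sum_sub_distrib]
    have := hvi y hy
    rw [hgain] at this
    exact sub_nonneg.mp ((mul_nonneg_iff_of_pos_left hp).mp this)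

/-- if the cost function `c` has a differentiable convex potential `Φ` (with
`c(x) = ∇Φ(x)` on the set of feasible flows), then a feasible flow is a Wardrop equilibrium
w.r.t. `c` iff it minimizes `Φ` over the feasible flows; in particular a Wardrop
equilibrium exists and the set of Wardrop equilibria is convex. -/
theorem wardrop_iff_minimizes_potential
    [∀ i, Nonempty (P i)]
    (d : I → ℝ) (hd : ∀ i, 0 < d i)
    (c : (∀ i, P i → ℝ) → ∀ i, P i → ℝ)
    (Φ : (∀ i, P i → ℝ) → ℝ)
    (hΦdiff : Differentiable ℝ Φ)
    (hΦconv : ConvexOn ℝ Set.univ Φ)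
    (hΦgrad : ∀ x, Feasible d x →
      ∀ i p, fderiv ℝ Φ x (Pi.single i (Pi.single p (1 : ℝ))) = c x i p) :
    (∀ x, Feasible d x →
      (IsWardrop d c x ↔ ∀ y, Feasible d y → Φ x ≤ Φ y)) ∧
    (∃ x, IsWardrop d c x) ∧
    Convex ℝ {x | IsWardrop d c x} := by
  set F := {x : ∀ i, P i → ℝ | Feasible d x}
  have hΦconvF : ConvexOn ℝ F Φ := hΦconv.subset (Set.subset_univ F) (convex_setOf_feasible d)
  have hiff (x) (hx : Feasible d x) : IsWardrop d c x ↔ ∀ y, Feasible d y → Φ x ≤ Φ y := by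
    have hgrad (y : ∀ i, P i → ℝ) :
        fderiv ℝ Φ x (y - x) = ∑ i, ∑ p, (y i p - x i p) * c x i p := by
      simp [map_eq_sum_sum_smul_single (fderiv ℝ Φ x) (y - x), hΦgrad x hx]
    calc IsWardrop d c x ↔ ∀ y ∈ F, 0 ≤ fderiv ℝ Φ x (y - x) := by
          simp_rw [hgrad]
          exact isWardrop_iff_forall_sum_sum_sub_mul_nonneg hx
      _ ↔ IsMinOn Φ F x := (hΦconvF.isMinOn_iff_forall_fderiv_sub_nonneg hx (hΦdiff x)).symm
      _ ↔ _ := isMinOn_iff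
  obtain ⟨x₀, hx₀, hmin⟩ := (isCompact_setOf_feasible d).exists_isMinOn
    (exists_feasible fun i => (hd i).le) hΦdiff.continuous.continuousOn
  have hwardrop : {x | IsWardrop d c x} = {x ∈ F | Φ x ≤ Φ x₀} := by
    ext x
    refine ⟨fun hx => ⟨hx.1, (hiff x hx.1).mp hx x₀ hx₀⟩, fun ⟨hx, hle⟩ => ?_⟩
    exact (hiff x hx).mpr fun y hy => hle.trans (hmin hy)
  exact ⟨hiff, ⟨x₀, (hiff x₀ hx₀).mpr fun y hy => hmin hy⟩, hwardrop ▸ hΦconvF.convex_le _⟩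
end
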